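/- Moreau's identity: for a proper closed convex function f: ℝᵖ → ℝ ∪ {+∞} with conjugate f*, and any y ∈ ℝᵖ and c > 0, y = prox_{cf}(y) + c·prox_{(1/c)f*}(y/c), where prox_{cf}(y) = argmin_x { f(x) + (1/(2c))‖x - y‖₂² }. -/

import Mathlib

/-! The residual `w = c⁻¹ (y - u)` of the proximal point `u` is a subgradient of `f` at `u`:
comparing the prox objective at `u` with its value at `u + t (x - u)`, bounding `f` there by
convexity, dividing by `t` and letting `t → 0` gives `f u + ⟪w, x - u⟫ ≤ f x`. Hence
`f* w ≤ ⟪u, w⟫ - f u ≤ f* x - ⟪u, x - w⟫`, and since `x ↦ ⟪u, x⟫ + (c/2)‖x - c⁻¹ y‖²` is minimized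
at `x = w`, the point `w` minimizes the prox objective of `f*`. By uniqueness `w = v`, that is,
`y = u + c v`. -/

open scoped RealInnerProductSpace
open Filter Topology Set

lemma EReal.ne_top_of_add_coe_le_add_coe {a b : EReal} {r s : ℝ} (h : a + r ≤ b + s)
    (hb : b ≠ ⊤) : a ≠ ⊤ := by
  rintro rfl
  rw [EReal.top_add_of_ne_bot (EReal.coe_ne_bot r), top_le_iff] at h
  exact (EReal.add_lt_top hb (EReal.coe_ne_top s)).ne h

lemma le_of_forall_le_add_mul {a b K : ℝ} (h : ∀ t ∈ Ioc (0 : ℝ) 1, a ≤ b + t * K) : a ≤ b := by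
  have hlim : Tendsto (fun t : ℝ => b + t * K) (𝓝[>] 0) (𝓝 b) := by
    have : Continuous fun t : ℝ => b + t * K := by fun_prop
    simpa using (this.tendsto 0).mono_left nhdsWithin_le_nhds
  exact ge_of_tendsto hlim (by filter_upwards [Ioc_mem_nhdsGT one_pos] using h)

variable {E : Type*} [NormedAddCommGroup E] [InnerProductSpace ℝ E]

lemma norm_smul_add_smul_sub_sq (u x y : E) (t : ℝ) :
    ‖(1 - t) • u + t • x - y‖ ^ 2 = ‖u - y‖ ^ 2 + 2 * (t * ⟪u - y, x - u⟫) + t ^ 2 * ‖x - u‖ ^ 2 := by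
  rw [show (1 - t) • u + t • x - y = (u - y) + t • (x - u) by module, norm_add_sq_real,
    real_inner_smul_right, norm_smul, Real.norm_eq_abs, mul_pow, sq_abs]

lemma le_add_mul_of_prox_le {fu fx c t : ℝ} {u x y : E} (ht : 0 < t)
    (h : fu + 1 / (2 * c) * ‖u - y‖ ^ 2 ≤
      (1 - t) * fu + t * fx + 1 / (2 * c) * ‖(1 - t) • u + t • x - y‖ ^ 2) :
    fu + ⟪c⁻¹ • (y - u), x - u⟫ ≤ fx + t * (1 / (2 * c) * ‖x - u‖ ^ 2) := by
  refine le_of_mul_le_mul_left ?_ ht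
  rw [norm_smul_add_smul_sub_sq] at h
  rw [real_inner_smul_left, ← neg_sub u y, inner_neg_left]
  linear_combination h

lemma inner_add_norm_sub_sq_le {c : ℝ} (hc : 0 < c) (u y x : E) :
    ⟪u, c⁻¹ • (y - u)⟫ + c / 2 * ‖c⁻¹ • (y - u) - c⁻¹ • y‖ ^ 2 ≤
      ⟪u, x⟫ + c / 2 * ‖x - c⁻¹ • y‖ ^ 2 := by
  set m := c⁻¹ • (y - u)
  have hm : m - c⁻¹ • y = -(c⁻¹ • u) := by simp only [m]; module
  have hsquare : ⟪u, x⟫ + c / 2 * ‖x - c⁻¹ • y‖ ^ 2 =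
      ⟪u, m⟫ + c / 2 * ‖m - c⁻¹ • y‖ ^ 2 + c / 2 * ‖x - m‖ ^ 2 := by
    have hcc : c * c⁻¹ = 1 := mul_inv_cancel₀ hc.ne'
    have hux : ⟪u, x⟫ = ⟪u, x - m⟫ + ⟪u, m⟫ := by rw [← inner_add_right, sub_add_cancel]
    rw [hux, show x - c⁻¹ • y = (x - m) + (m - c⁻¹ • y) by abel, hm, norm_add_sq_real, norm_neg,
      inner_neg_right, norm_smul, Real.norm_eq_abs, mul_pow, sq_abs,
      real_inner_smul_right (x - m)]
    linear_combination real_inner_comm (x - m) u - ⟪x - m, u⟫ * hcc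
  rw [hsquare]
  have : 0 ≤ c / 2 * ‖x - m‖ ^ 2 := by positivity
  linarith

noncomputable def fenchelConjugate (f : E → EReal) (x : E) : EReal :=
  ⨆ z, ((⟪z, x⟫ : ℝ) : EReal) - f z

lemma inner_sub_le_fenchelConjugate (f : E → EReal) (x z : E) :
    ((⟪z, x⟫ : ℝ) : EReal) - f z ≤ fenchelConjugate f x :=
  le_iSup (fun z => ((⟪z, x⟫ : ℝ) : EReal) - f z) z

lemma fenchelConjugate_le_of_forall_le {f : E → EReal} {u w : E} {a : ℝ}
    (h : ∀ z, ((a + ⟪w, z - u⟫ : ℝ) : EReal) ≤ f z) :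
    fenchelConjugate f w ≤ ((⟪u, w⟫ - a : ℝ) : EReal) :=
  iSup_le fun z => calc
    ((⟪z, w⟫ : ℝ) : EReal) - f z ≤ ((⟪z, w⟫ : ℝ) : EReal) - ((a + ⟪w, z - u⟫ : ℝ) : EReal) :=
      EReal.sub_le_sub le_rfl (h z)
    _ = ((⟪u, w⟫ - a : ℝ) : EReal) := by
      rw [← EReal.coe_sub, inner_sub_right, real_inner_comm z, real_inner_comm u]
      ring_nf

section Prox

variable {f : E → EReal} {y u : E} {c : ℝ}

lemma add_inner_le_of_isMin_prox (hbot : ∀ x, f x ≠ ⊥)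
    (hconvex : ∀ x z : E, ∀ a b : ℝ, 0 ≤ a → 0 ≤ b → a + b = 1 →
      f (a • x + b • z) ≤ (a : EReal) * f x + (b : EReal) * f z)
    (hu : ∀ x, f u + ((1 / (2 * c) * ‖u - y‖ ^ 2 : ℝ) : EReal) ≤
      f x + ((1 / (2 * c) * ‖x - y‖ ^ 2 : ℝ) : EReal))
    {fu : ℝ} (hfu : f u = fu) (x : E) :
    ((fu + ⟪c⁻¹ • (y - u), x - u⟫ : ℝ) : EReal) ≤ f x := by
  by_cases htop : f x = ⊤
  · simp [htop]
  lift f x to ℝ using ⟨htop, hbot x⟩ with fx hfx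
  rw [EReal.coe_le_coe_iff]
  refine le_of_forall_le_add_mul fun t ⟨ht₀, ht₁⟩ => le_add_mul_of_prox_le ht₀ ?_
  have hmin := hu ((1 - t) • u + t • x)
  have hconv := hconvex u x (1 - t) t (by linarith) ht₀.le (by ring)
  rw [hfu, ← hfx] at hconv
  rw [hfu] at hmin
  have h := hmin.trans (add_le_add_left hconv _)
  exact_mod_cast h

lemma isMin_conj_prox_of_forall_le (hc : 0 < c) {fu : ℝ} (hfu : f u = fu)
    (hsub : ∀ x, ((fu + ⟪c⁻¹ • (y - u), x - u⟫ : ℝ) : EReal) ≤ f x) (x : E) :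
    fenchelConjugate f (c⁻¹ • (y - u)) + ((c / 2 * ‖c⁻¹ • (y - u) - c⁻¹ • y‖ ^ 2 : ℝ) : EReal) ≤
      fenchelConjugate f x + ((c / 2 * ‖x - c⁻¹ • y‖ ^ 2 : ℝ) : EReal) := by
  have hx := inner_sub_le_fenchelConjugate f x u
  rw [hfu, ← EReal.coe_sub] at hx
  calc _ ≤ (((⟪u, c⁻¹ • (y - u)⟫ - fu) + c / 2 * ‖c⁻¹ • (y - u) - c⁻¹ • y‖ ^ 2 : ℝ) : EReal) := by
        rw [EReal.coe_add]
        exact add_le_add_left (fenchelConjugate_le_of_forall_le hsub) _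
    _ ≤ ((⟪u, x⟫ - fu + c / 2 * ‖x - c⁻¹ • y‖ ^ 2 : ℝ) : EReal) := by
        have := inner_add_norm_sub_sq_le hc u y x
        exact_mod_cast (by linarith)
    _ ≤ _ := by
        rw [EReal.coe_add]
        exact add_le_add_left hx _

end Prox

theorem moreau_identity_general {p : ℕ}
    (f : EuclideanSpace ℝ (Fin p) → EReal)
    (hne_bot : ∀ x, f x ≠ ⊥) (hproper : ∃ x, f x ≠ ⊤)
    (hconvex : ∀ x z : EuclideanSpace ℝ (Fin p), ∀ a b : ℝ, 0 ≤ a → 0 ≤ b → a + b = 1 →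
      f (a • x + b • z) ≤ (a : EReal) * f x + (b : EReal) * f z)
    (y : EuclideanSpace ℝ (Fin p)) (c : ℝ) (hc : 0 < c)
    (u v : EuclideanSpace ℝ (Fin p))
    -- `u = prox_{cf}(y)`: the unique minimizer of `x ↦ f x + (1/(2c))‖x - y‖²`
    (hu : ∀ x, f u + ((1 / (2 * c) * ‖u - y‖ ^ 2 : ℝ) : EReal) ≤
      f x + ((1 / (2 * c) * ‖x - y‖ ^ 2 : ℝ) : EReal))
    -- `v = prox_{(1/c) f*}(y/c)`: the unique minimizer of `x ↦ f*(x) + (c/2)‖x - y/c‖²`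
    (hv_uniq : ∀ w, (∀ x, (⨆ z, (((⟪z, w⟫ : ℝ)) : EReal) - f z) + ((c / 2 * ‖w - c⁻¹ • y‖ ^ 2 : ℝ) : EReal) ≤
      (⨆ z, (((⟪z, x⟫ : ℝ)) : EReal) - f z) + ((c / 2 * ‖x - c⁻¹ • y‖ ^ 2 : ℝ) : EReal)) → w = v) :
    y = u + c • v := by
  obtain ⟨x₀, hx₀⟩ := hproper
  have hfu : f u ≠ ⊤ := EReal.ne_top_of_add_coe_le_add_coe (hu x₀) hx₀
  obtain ⟨fu, hfu⟩ : ∃ r : ℝ, f u = r := ⟨_, (EReal.coe_toReal hfu (hne_bot u)).symm⟩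
  have hsub := add_inner_le_of_isMin_prox hne_bot hconvex hu hfu
  have hv : c⁻¹ • (y - u) = v := hv_uniq _ (isMin_conj_prox_of_forall_le hc hfu hsub)
  rw [← hv, smul_smul, mul_inv_cancel₀ hc.ne', one_smul, add_sub_cancel]

/-- Moreau's identity: for a proper closed convex `f : ℝᵖ → ℝ ∪ {+∞}` with Fenchel
conjugate `f*`, any `y` and `c > 0` satisfy
`y = prox_{cf}(y) + c • prox_{(1/c) f*}(y/c)`, where the proximal points are
characterized as the unique minimizers of the corresponding objectives. -/
theorem moreau_identity {p : ℕ}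
    (f : EuclideanSpace ℝ (Fin p) → EReal)
    (hne_bot : ∀ x, f x ≠ ⊥) (hproper : ∃ x, f x ≠ ⊤)
    (hclosed : LowerSemicontinuous f)
    (hconvex : ∀ x z : EuclideanSpace ℝ (Fin p), ∀ a b : ℝ, 0 ≤ a → 0 ≤ b → a + b = 1 →
      f (a • x + b • z) ≤ (a : EReal) * f x + (b : EReal) * f z)
    (y : EuclideanSpace ℝ (Fin p)) (c : ℝ) (hc : 0 < c)
    (u v : EuclideanSpace ℝ (Fin p))
    -- `u = prox_{cf}(y)`: the unique minimizer of `x ↦ f x + (1/(2c))‖x - y‖²`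
    (hu : ∀ x, f u + ((1 / (2 * c) * ‖u - y‖ ^ 2 : ℝ) : EReal) ≤
      f x + ((1 / (2 * c) * ‖x - y‖ ^ 2 : ℝ) : EReal))
    (hu_uniq : ∀ w, (∀ x, f w + ((1 / (2 * c) * ‖w - y‖ ^ 2 : ℝ) : EReal) ≤
      f x + ((1 / (2 * c) * ‖x - y‖ ^ 2 : ℝ) : EReal)) → w = u)
    -- `v = prox_{(1/c) f*}(y/c)`: the unique minimizer of `x ↦ f*(x) + (c/2)‖x - y/c‖²`
    (hv : ∀ x, (⨆ z, (((⟪z, v⟫ : ℝ)) : EReal) - f z) + ((c / 2 * ‖v - c⁻¹ • y‖ ^ 2 : ℝ) : EReal) ≤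
      (⨆ z, (((⟪z, x⟫ : ℝ)) : EReal) - f z) + ((c / 2 * ‖x - c⁻¹ • y‖ ^ 2 : ℝ) : EReal))
    (hv_uniq : ∀ w, (∀ x, (⨆ z, (((⟪z, w⟫ : ℝ)) : EReal) - f z) + ((c / 2 * ‖w - c⁻¹ • y‖ ^ 2 : ℝ) : EReal) ≤
      (⨆ z, (((⟪z, x⟫ : ℝ)) : EReal) - f z) + ((c / 2 * ‖x - c⁻¹ • y‖ ^ 2 : ℝ) : EReal)) → w = v) :
    y = u + c • v :=
  moreau_identity_general f hne_bot hproper hconvex y c hc u v hu hv_uniq
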